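/- Let (V, g, I, J, K) be a hyper-Kähler vector space of real dimension 2n (n ≥ 1) with associated Kähler forms ω_I, ω_J, ω_K. Then for every w ∈ V*, the identity ω_J^{n−1} ∧ (w∘K) = −(ω_I^{n−1} ∧ w) holds in ⋀^{2n−1}V*, where w∘K ∈ V* is the precomposition of w with K. -/
import Mathlib


set_option synthInstance.maxHeartbeats 1000000
set_option maxHeartbeats 1000000

/-- The element of `⋀² V*` (inside the exterior algebra of the dual space) corresponding to
a bilinear form `B` on `V` (given as a linear map `V →ₗ V*`): in terms of a basis `(eᵢ)`
with dual basis `(eⁱ)`, it is `∑_{i<j} B(eᵢ,eⱼ) eⁱ ∧ eʲ = ½ ∑_{i,j} B(eᵢ,eⱼ) eⁱ ∧ eʲ`. -/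
noncomputable def extOfForm {V : Type} [AddCommGroup V] [Module ℝ V] [FiniteDimensional ℝ V]
    (B : V →ₗ[ℝ] Module.Dual ℝ V) : ExteriorAlgebra ℝ (Module.Dual ℝ V) :=
  (2⁻¹ : ℝ) • TensorProduct.lift
    (((LinearMap.mul ℝ (ExteriorAlgebra ℝ (Module.Dual ℝ V))).compl₂
        (ExteriorAlgebra.ι ℝ)) ∘ₗ (ExteriorAlgebra.ι ℝ))
    ((dualTensorHomEquiv ℝ V (Module.Dual ℝ V)).symm B)

set_option linter.unusedSectionVars false
set_option linter.unusedVariables false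

open ExteriorAlgebra Module

section Aux
variable {V : Type} [AddCommGroup V] [Module ℝ V] [FiniteDimensional ℝ V]

lemma extOfForm_eq {κ : Type*} [Fintype κ] (e : Basis κ ℝ V) (B : V →ₗ[ℝ] Module.Dual ℝ V) :
    extOfForm B = (2⁻¹ : ℝ) • ∑ i, ι ℝ (e.coord i) * ι ℝ (B (e i)) := by
  have h : (dualTensorHomEquiv ℝ V (Module.Dual ℝ V)).symm B
      = ∑ i, e.coord i ⊗ₜ[ℝ] B (e i) := by
    apply (dualTensorHomEquiv ℝ V (Module.Dual ℝ V)).injective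
    rw [LinearEquiv.apply_symm_apply, map_sum]
    refine LinearMap.ext fun x => ?_
    simp only [dualTensorHomEquiv, dualTensorHomEquivOfBasis_apply, dualTensorHom_apply,
      LinearMap.coe_sum, Finset.sum_apply]
    conv_lhs => rw [← e.sum_repr x]
    rw [map_sum]
    simp [Basis.coord_apply]
  rw [extOfForm, h, map_sum]
  congr 1

lemma ι_swap {M : Type*} [AddCommGroup M] [Module ℝ M] (a b : M) :
    ι ℝ a * ι ℝ b = -(ι ℝ b * ι ℝ a) :=
  eq_neg_of_add_eq_zero_left (ι_add_mul_swap a b)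

lemma ιι_mul_ι_comm {M : Type*} [AddCommGroup M] [Module ℝ M] (a b c : M) :
    (ι ℝ a * ι ℝ b) * ι ℝ c = ι ℝ c * (ι ℝ a * ι ℝ b) := by
  rw [mul_assoc, ι_swap b c, mul_neg, ← mul_assoc, ι_swap a c, neg_mul, neg_neg, mul_assoc]

lemma extOfForm_mul_ι_comm (B : V →ₗ[ℝ] Module.Dual ℝ V) (α : Module.Dual ℝ V) :
    extOfForm B * ι ℝ α = ι ℝ α * extOfForm B := by
  rw [extOfForm_eq (Module.finBasis ℝ V) B, smul_mul_assoc, mul_smul_comm,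
    Finset.sum_mul, Finset.mul_sum]
  congr 1
  exact Finset.sum_congr rfl fun i _ => ιι_mul_ι_comm _ _ _

lemma extOfForm_pow_mul_ι_comm (B : V →ₗ[ℝ] Module.Dual ℝ V) (m : ℕ) (α : Module.Dual ℝ V) :
    extOfForm B ^ m * ι ℝ α = ι ℝ α * extOfForm B ^ m := by
  induction m with
  | zero => simp
  | succ k ih => rw [pow_succ, mul_assoc, extOfForm_mul_ι_comm, ← mul_assoc, ih, mul_assoc]

lemma contract_ιι (d : Module.Dual ℝ (Module.Dual ℝ V)) (a b : Module.Dual ℝ V) :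
    CliffordAlgebra.contractLeft d (ι ℝ a * ι ℝ b) = d a • ι ℝ b - d b • ι ℝ a := by
  rw [CliffordAlgebra.contractLeft_ι_mul, CliffordAlgebra.contractLeft_ι,
    Algebra.algebraMap_eq_smul_one, mul_smul_comm, mul_one]

lemma contract_extOfForm (B : V →ₗ[ℝ] Module.Dual ℝ V) (hB : ∀ x y, B x y = -(B y x)) (v : V) :
    CliffordAlgebra.contractLeft (Module.Dual.eval ℝ V v) (extOfForm B) = ι ℝ (B v) := by
  classical
  set e := Module.finBasis ℝ V
  rw [extOfForm_eq e B, map_smul, map_sum]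
  have h1 : ∑ i, CliffordAlgebra.contractLeft (Module.Dual.eval ℝ V v)
        (ι ℝ (e.coord i) * ι ℝ (B (e i)))
      = ∑ i, (e.coord i v • ι ℝ (B (e i)) - B (e i) v • ι ℝ (e.coord i)) := by
    refine Finset.sum_congr rfl fun i _ => ?_
    rw [contract_ιι]
    rfl
  rw [h1, Finset.sum_sub_distrib]
  have h2 : ∑ i, e.coord i v • ι ℝ (B (e i)) = ι ℝ (B v) := by
    simp_rw [← map_smul, ← map_sum, Basis.coord_apply, Basis.sum_repr]
  have h3 : ∑ i, B (e i) v • ι ℝ (e.coord i) = -(ι ℝ (B v)) := by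
    have : ∑ i, B (e i) v • e.coord i = -(B v) := by
      refine LinearMap.ext fun x => ?_
      simp only [LinearMap.coe_sum, Finset.sum_apply, LinearMap.smul_apply, LinearMap.neg_apply,
        Basis.coord_apply, smul_eq_mul]
      rw [← hB x v]
      conv_rhs => rw [← e.sum_repr x]
      rw [map_sum, LinearMap.sum_apply]
      refine Finset.sum_congr rfl fun i _ => ?_
      rw [map_smul, LinearMap.smul_apply, smul_eq_mul, mul_comm]
    simp_rw [← map_smul, ← map_sum, this, map_neg]
  rw [h2, h3, sub_neg_eq_add]
  norm_num
  rw [← two_smul ℝ, smul_smul]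
  norm_num

lemma contract_extOfForm_mul (d : Module.Dual ℝ (Module.Dual ℝ V)) (B : V →ₗ[ℝ] Module.Dual ℝ V)
    (y : ExteriorAlgebra ℝ (Module.Dual ℝ V)) :
    CliffordAlgebra.contractLeft d (extOfForm B * y)
      = CliffordAlgebra.contractLeft d (extOfForm B) * y
        + extOfForm B * CliffordAlgebra.contractLeft d y := by
  classical
  set e := Module.finBasis ℝ V
  rw [extOfForm_eq e B]
  simp only [smul_mul_assoc, map_smul, Finset.sum_mul, map_sum]
  rw [← smul_add, ← Finset.sum_add_distrib]
  congr 1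
  refine Finset.sum_congr rfl fun i _ => ?_
  rw [mul_assoc, CliffordAlgebra.contractLeft_ι_mul, CliffordAlgebra.contractLeft_ι_mul,
    contract_ιι]
  simp only [mul_sub, sub_mul, mul_smul_comm, smul_mul_assoc, smul_sub, mul_assoc]
  abel

lemma contract_pow (B : V →ₗ[ℝ] Module.Dual ℝ V) (hB : ∀ x y, B x y = -(B y x)) (v : V)
    (m : ℕ) :
    CliffordAlgebra.contractLeft (Module.Dual.eval ℝ V v) (extOfForm B ^ (m + 1))
      = (m + 1) • (ι ℝ (B v) * extOfForm B ^ m) := by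
  induction m with
  | zero => simpa using contract_extOfForm B hB v
  | succ k ih =>
    rw [pow_succ', contract_extOfForm_mul, contract_extOfForm B hB v, ih, mul_smul_comm,
      ← mul_assoc, extOfForm_mul_ι_comm, mul_assoc, ← pow_succ']
    conv_rhs => rw [succ_nsmul]
    exact add_comm _ _

lemma extOfForm_pow_mem (B : V →ₗ[ℝ] Module.Dual ℝ V) (m : ℕ) :
    extOfForm B ^ m ∈ Submodule.span ℝ
      (Set.range (ιMulti ℝ (2 * m) (M := Module.Dual ℝ V))) := by
  rw [ιMulti_span_fixedDegree]
  have h2 : extOfForm B ∈ ((LinearMap.range (ι ℝ (M := Module.Dual ℝ V))) ^ 2 :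
      Submodule ℝ (ExteriorAlgebra ℝ (Module.Dual ℝ V))) := by
    rw [extOfForm_eq (Module.finBasis ℝ V) B]
    refine Submodule.smul_mem _ _ (Submodule.sum_mem _ fun i _ => ?_)
    rw [pow_two]
    exact Submodule.mul_mem_mul (LinearMap.mem_range_self _ _) (LinearMap.mem_range_self _ _)
  have := Submodule.pow_mem_pow _ h2 m
  rwa [← pow_mul] at this

lemma det_eq_one_of_sq_eq_neg_one {U : Type*} [AddCommGroup U] [Module ℝ U]
    [FiniteDimensional ℝ U] (f : U →ₗ[ℝ] U) (hf : f ∘ₗ f = -LinearMap.id) :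
    LinearMap.det f = 1 := by
  classical
  set b := Module.finBasis ℝ U
  set M := LinearMap.toMatrix b b f with hM
  have hMM : M * M = -1 := by
    rw [hM, ← LinearMap.toMatrix_comp b b b f f, hf, map_neg, LinearMap.toMatrix_id]
  have hdet : LinearMap.det f = M.det := (LinearMap.det_toMatrix b f).symm
  set φ : ℝ → ℝ := fun t => (Real.cos t • (1 : Matrix (Fin (finrank ℝ U)) (Fin (finrank ℝ U)) ℝ)
      + Real.sin t • M).det with hφ
  have hinv : ∀ t : ℝ, (Real.cos t • (1 : Matrix (Fin (finrank ℝ U)) (Fin (finrank ℝ U)) ℝ)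
      + Real.sin t • M) * (Real.cos t • 1 - Real.sin t • M) = 1 := by
    intro t
    simp only [mul_sub, add_mul, smul_mul_assoc, mul_smul_comm, smul_smul, one_mul, mul_one]
    rw [hMM]
    simp only [smul_neg]
    match_scalars
    · nlinarith [Real.sin_sq_add_cos_sq t]
    · ring
  have hne : ∀ t : ℝ, φ t ≠ 0 := by
    intro t
    have h := congrArg Matrix.det (hinv t)
    rw [Matrix.det_mul, Matrix.det_one] at h
    exact left_ne_zero_of_mul_eq_one h
  have hcont : Continuous φ := by
    apply Continuous.matrix_det
    exact (Real.continuous_cos.smul continuous_const).add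
      (Real.continuous_sin.smul continuous_const)
  have h0 : φ 0 = 1 := by simp [hφ]
  have hpi : φ (Real.pi / 2) = M.det := by simp [hφ]
  have hsq : M.det * M.det = 1 := by
    have h := congrArg Matrix.det hMM
    rw [Matrix.det_mul, Matrix.det_neg, Matrix.det_one, mul_one] at h
    rcases Nat.even_or_odd (Fintype.card (Fin (finrank ℝ U))) with he | ho
    · rw [he.neg_one_pow] at h; exact h
    · rw [ho.neg_one_pow] at h
      nlinarith [mul_self_nonneg M.det]
  have hpos : 0 < M.det := by
    by_contra hle
    push_neg at hle
    have hlt : M.det < 0 := lt_of_le_of_ne hle (fun h => hne (Real.pi/2) (by rw [hpi, h]))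
    have : (0:ℝ) ∈ Set.Icc (φ (Real.pi/2)) (φ 0) := by
      constructor
      · rw [hpi]; exact le_of_lt hlt
      · rw [h0]; norm_num
    have := intermediate_value_Icc' (by positivity : (0:ℝ) ≤ Real.pi/2) hcont.continuousOn this
    obtain ⟨t, _, ht⟩ := this
    exact hne t ht
  rw [hdet]
  rcases mul_self_eq_one_iff.mp hsq with h | h
  · exact h
  · exfalso; rw [h] at hpos; linarith

lemma map_ιMulti_det {M : Type*} [AddCommGroup M] [Module ℝ M] [FiniteDimensional ℝ M]
    (f : M →ₗ[ℝ] M) (v : Fin (finrank ℝ M) → M) :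
    ExteriorAlgebra.map f (ιMulti ℝ (finrank ℝ M) v)
      = LinearMap.det f • ιMulti ℝ (finrank ℝ M) v := by
  classical
  rw [map_apply_ιMulti, ← sub_eq_zero, ← Module.forall_dual_apply_eq_zero_iff ℝ]
  intro φ
  rw [map_sub, map_smul, sub_eq_zero]
  set b := Module.finBasis ℝ M
  set A := φ.compAlternatingMap (ιMulti ℝ (finrank ℝ M) (M := M)) with hA
  have h1 : ∀ u : Fin (finrank ℝ M) → M, φ (ιMulti ℝ (finrank ℝ M) u) = A u := fun _ => rfl
  have hAe := A.eq_smul_basis_det b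
  have h2 : A (f ∘ v) = A b * (LinearMap.det f * b.det v) := by
    conv_lhs => rw [hAe]
    rw [AlternatingMap.smul_apply, Basis.det_comp, smul_eq_mul]
  have h3 : A v = A b * b.det v := by
    conv_lhs => rw [hAe]
    rw [AlternatingMap.smul_apply, smul_eq_mul]
  rw [h1, h1, h2, h3, smul_eq_mul]
  ring

lemma map_det_of_mem_span {M : Type*} [AddCommGroup M] [Module ℝ M] [FiniteDimensional ℝ M]
    (f : M →ₗ[ℝ] M) {x : ExteriorAlgebra ℝ M}
    (hx : x ∈ Submodule.span ℝ (Set.range (ιMulti ℝ (finrank ℝ M) (M := M)))) :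
    ExteriorAlgebra.map f x = LinearMap.det f • x := by
  induction hx using Submodule.span_induction with
  | mem y hy => obtain ⟨v, rfl⟩ := hy; exact map_ιMulti_det f v
  | zero => simp
  | add y z _ _ hy hz => rw [map_add, hy, hz, smul_add]
  | smul c y _ hy => rw [map_smul, hy, smul_comm]

lemma map_dualMap_extOfForm (fE : V ≃ₗ[ℝ] V) (B : V →ₗ[ℝ] Module.Dual ℝ V) :
    ExteriorAlgebra.map ((fE : V →ₗ[ℝ] V).dualMap) (extOfForm B)
      = extOfForm ((fE : V →ₗ[ℝ] V).dualMap ∘ₗ B ∘ₗ (fE : V →ₗ[ℝ] V)) := by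
  classical
  set e := Module.finBasis ℝ V
  rw [extOfForm_eq e B, extOfForm_eq (e.map fE.symm)
    ((fE : V →ₗ[ℝ] V).dualMap ∘ₗ B ∘ₗ (fE : V →ₗ[ℝ] V)), map_smul, map_sum]
  congr 1
  refine Finset.sum_congr rfl fun i _ => ?_
  rw [map_mul, map_apply_ι, map_apply_ι]
  have harg1 : (e.map fE.symm).coord i = (fE : V →ₗ[ℝ] V).dualMap (e.coord i) := by
    refine LinearMap.ext fun x => ?_
    rw [LinearMap.dualMap_apply]
    simp [Basis.coord_apply, Basis.map_repr]
  have harg2 : ((fE : V →ₗ[ℝ] V).dualMap ∘ₗ B ∘ₗ (fE : V →ₗ[ℝ] V)) ((e.map fE.symm) i)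
      = (fE : V →ₗ[ℝ] V).dualMap (B (e i)) := by
    simp only [LinearMap.comp_apply, Basis.map_apply]
    rw [LinearEquiv.coe_coe, LinearEquiv.apply_symm_apply]
  rw [harg1, harg2]
end Aux

/-- Let `(V, g, I, J, K)` be a hyper-Kähler vector space of real dimension `2n` (`n ≥ 1`),
with associated Kähler forms `ω_I, ω_J, ω_K` regarded as elements of `⋀² V*`.  Then for
every `w ∈ V*` we have `ω_J^{n-1} ∧ (w∘K) = -(ω_I^{n-1} ∧ w)` in `⋀^{2n-1} V*`, where
`w∘K ∈ V*` is the precomposition of `w` with `K`. -/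
theorem stmt_9 {V : Type} [AddCommGroup V] [Module ℝ V] [FiniteDimensional ℝ V]
    (n : ℕ) (hn : 1 ≤ n) (hdim : Module.finrank ℝ V = 2 * n)
    (g : V →ₗ[ℝ] Module.Dual ℝ V)
    (hgsymm : ∀ v w : V, g v w = g w v)
    (hgpos : ∀ v : V, v ≠ 0 → 0 < g v v)
    (hgbij : Function.Bijective g)
    (I J K : V →ₗ[ℝ] V)
    (hI2 : I ∘ₗ I = -LinearMap.id) (hJ2 : J ∘ₗ J = -LinearMap.id)
    (hK2 : K ∘ₗ K = -LinearMap.id) (hIJK : I ∘ₗ (J ∘ₗ K) = -LinearMap.id)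
    (hIiso : ∀ v w : V, g (I v) (I w) = g v w)
    (hJiso : ∀ v w : V, g (J v) (J w) = g v w)
    (hKiso : ∀ v w : V, g (K v) (K w) = g v w)
    :
    ∀ w : Module.Dual ℝ V,
      extOfForm (g ∘ₗ J) ^ (n - 1) * ExteriorAlgebra.ι ℝ (w ∘ₗ K)
        = -(extOfForm (g ∘ₗ I) ^ (n - 1) * ExteriorAlgebra.ι ℝ w) := by
  classical
  have hI2' : ∀ v, I (I v) = -v := fun v => by
    simpa using LinearMap.ext_iff.1 hI2 v
  have hJ2' : ∀ v, J (J v) = -v := fun v => by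
    simpa using LinearMap.ext_iff.1 hJ2 v
  have hK2' : ∀ v, K (K v) = -v := fun v => by
    simpa using LinearMap.ext_iff.1 hK2 v
  have hIJK' : ∀ v, I (J (K v)) = -v := fun v => by
    simpa using LinearMap.ext_iff.1 hIJK v
  have hJK : ∀ v, J (K v) = I v := by
    intro v
    have h := congrArg I (hIJK' v)
    rw [hI2', map_neg] at h
    exact neg_injective h
  have hIK : ∀ v, I (K v) = -(J v) := by
    intro v
    have h := hJK (K v)
    rw [hK2', map_neg] at h
    exact h.symm
  have hIJ : ∀ v, I (J v) = K v := by
    intro v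
    have h := congrArg I (hIK v)
    rw [hI2', map_neg] at h
    exact (neg_injective h).symm
  have hJI : ∀ v, J (I v) = -(K v) := by
    intro v
    rw [← hJK v, hJ2']
  have hKJ : ∀ v, K (J v) = -(I v) := by
    intro v
    have h1 : J (K (J v)) = K v := by rw [hJK, hIJ]
    have h2 := congrArg J h1
    rw [hJ2', hJK] at h2
    exact neg_eq_iff_eq_neg.1 h2
  have hIanti : ∀ x y, (g ∘ₗ I) x y = -((g ∘ₗ I) y x) := by
    intro x y
    have h := hIiso x (I y)
    rw [hI2', map_neg] at h
    have h2 := hgsymm x (I y)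
    simp only [LinearMap.comp_apply]
    linarith
  have hJanti : ∀ x y, (g ∘ₗ J) x y = -((g ∘ₗ J) y x) := by
    intro x y
    have h := hJiso x (J y)
    rw [hJ2', map_neg] at h
    have h2 := hgsymm x (J y)
    simp only [LinearMap.comp_apply]
    linarith
  set c : ℝ := (Real.sqrt 2)⁻¹ with hcdef
  have hc : c * c = 2⁻¹ := by
    rw [hcdef, ← mul_inv, Real.mul_self_sqrt (by norm_num : (0:ℝ) ≤ 2)]
  set R : V →ₗ[ℝ] V := c • (I + J) with hRdef
  have hRapp : ∀ v, R v = c • (I v + J v) := fun v => by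
    rw [hRdef]; simp
  have hR2' : ∀ v, R (R v) = -v := by
    intro v
    rw [hRapp v, map_smul, map_add, hRapp, hRapp, hI2', hJI, hIJ, hJ2']
    match_scalars
    · linear_combination (-2 : ℝ) * hc
    · ring
  have hcross1 : ∀ v u, g (I v) (J u) = g (K v) u := by
    intro v u
    have h := hJiso (K v) u
    rw [hJK] at h
    exact h
  have hcross2 : ∀ v u, g (J v) (I u) = -(g (K v) u) := by
    intro v u
    have h := hIiso (-(K v)) u
    rw [map_neg, hIK, neg_neg, map_neg, LinearMap.neg_apply] at h
    exact h
  have hRiso : ∀ v u, g (R v) (R u) = g v u := by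
    intro v u
    rw [hRapp v, hRapp u]
    simp only [map_smul, map_add, LinearMap.smul_apply, LinearMap.add_apply, smul_eq_mul]
    rw [hIiso, hJiso, hcross1, hcross2]
    linear_combination (2 * g v u) * hc
  have hIR : ∀ v, I (R v) = R (J v) := by
    intro v
    rw [hRapp v, hRapp (J v), map_smul, map_add, hI2', hIJ, hJ2']
    rw [add_comm]
  have hcomp1 : R ∘ₗ (-R) = LinearMap.id := by
    refine LinearMap.ext fun v => ?_
    simp only [LinearMap.comp_apply, LinearMap.neg_apply, map_neg, LinearMap.id_apply]
    rw [hR2', neg_neg]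
  have hcomp2 : (-R) ∘ₗ R = LinearMap.id := by
    refine LinearMap.ext fun v => ?_
    simp only [LinearMap.comp_apply, LinearMap.neg_apply, LinearMap.id_apply]
    rw [hR2', neg_neg]
  have h5 : ExteriorAlgebra.map (R.dualMap) (extOfForm (g ∘ₗ I))
      = extOfForm (R.dualMap ∘ₗ ((g ∘ₗ I) ∘ₗ R)) :=
    map_dualMap_extOfForm (LinearEquiv.ofLinear R (-R) hcomp1 hcomp2) (g ∘ₗ I)
  have hpull : R.dualMap ∘ₗ ((g ∘ₗ I) ∘ₗ R) = g ∘ₗ J := by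
    refine LinearMap.ext fun v => ?_
    refine LinearMap.ext fun u => ?_
    simp only [LinearMap.comp_apply, LinearMap.dualMap_apply]
    rw [hIR, hRiso]
  have hdualsq : R.dualMap ∘ₗ R.dualMap = -LinearMap.id := by
    refine LinearMap.ext fun φ => ?_
    refine LinearMap.ext fun x => ?_
    simp only [LinearMap.comp_apply, LinearMap.dualMap_apply, LinearMap.neg_apply,
      LinearMap.id_apply]
    rw [hR2', map_neg]
  have hfinW : Module.finrank ℝ (Module.Dual ℝ V) = 2 * n := by
    rw [Subspace.dual_finrank_eq]; exact hdim
  have step1 : extOfForm (g ∘ₗ J) ^ n = extOfForm (g ∘ₗ I) ^ n := by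
    have hmem := extOfForm_pow_mem (g ∘ₗ I) n
    rw [← hfinW] at hmem
    have h6 := map_det_of_mem_span (R.dualMap) hmem
    rw [det_eq_one_of_sq_eq_neg_one _ hdualsq, one_smul] at h6
    calc extOfForm (g ∘ₗ J) ^ n
        = (ExteriorAlgebra.map (R.dualMap) (extOfForm (g ∘ₗ I))) ^ n := by
          rw [h5, hpull]
      _ = ExteriorAlgebra.map (R.dualMap) (extOfForm (g ∘ₗ I) ^ n) := by rw [map_pow]
      _ = extOfForm (g ∘ₗ I) ^ n := h6
  have step2 : ∀ v : V,
      ExteriorAlgebra.ι ℝ ((g ∘ₗ I) v) * extOfForm (g ∘ₗ I) ^ (n - 1)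
        = ExteriorAlgebra.ι ℝ ((g ∘ₗ J) v) * extOfForm (g ∘ₗ J) ^ (n - 1) := by
    intro v
    have hA := contract_pow (g ∘ₗ I) hIanti v (n - 1)
    have hB := contract_pow (g ∘ₗ J) hJanti v (n - 1)
    rw [Nat.sub_add_cancel hn] at hA hB
    have h7 : (n : ℕ) • (ExteriorAlgebra.ι ℝ ((g ∘ₗ I) v) * extOfForm (g ∘ₗ I) ^ (n - 1))
        = (n : ℕ) • (ExteriorAlgebra.ι ℝ ((g ∘ₗ J) v) * extOfForm (g ∘ₗ J) ^ (n - 1)) := by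
      rw [← hA, ← hB, step1]
    rw [← Nat.cast_smul_eq_nsmul ℝ, ← Nat.cast_smul_eq_nsmul ℝ] at h7
    have hne : (n : ℝ) ≠ 0 := by
      exact_mod_cast Nat.one_le_iff_ne_zero.mp hn
    exact smul_right_injective _ hne h7
  intro w
  obtain ⟨u, hu⟩ := hgbij.surjective w
  set v : V := -(I u) with hvdef
  have hv : (g ∘ₗ I) v = w := by
    simp only [LinearMap.comp_apply, hvdef]
    rw [map_neg, hI2', neg_neg, hu]
  have hIvK : ∀ (v u' : V), g (I v) (K u') = -(g (J v) u') := by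
    intro v u'
    have h := hKiso (-(J v)) u'
    have h1 : K (-(J v)) = I v := by rw [map_neg, hKJ, neg_neg]
    rw [h1] at h
    rw [map_neg, LinearMap.neg_apply] at h
    exact h
  have hwK : w ∘ₗ K = -((g ∘ₗ J) v) := by
    refine LinearMap.ext fun u' => ?_
    simp only [LinearMap.comp_apply, LinearMap.neg_apply, ← hv]
    exact hIvK v u'
  rw [hwK, map_neg, mul_neg, ← hv, extOfForm_pow_mul_ι_comm, extOfForm_pow_mul_ι_comm]
  exact congrArg Neg.neg (step2 v).symm
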